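/- arXiv:1010.3263 — 9 statements merged into one kernel-verified Lean document; each statement's English description precedes it below -/
import Mathlib

section
/- For every n ≥ 1 there exists a regular language L over a three-letter alphabet with quotient complexity κ(L) = n and syntactic complexity σ(L) = n^n; that is, the upper bound n^n on syntactic complexity is tight for alphabets of at least three letters. -/
/-- The left quotient of a language `L` by a word `w`: `{x | w ++ x ∈ L}`. -/
def leftQ {α : Type*} (L : Set (List α)) (w : List α) : Set (List α) :=
  {x | w ++ x ∈ L}

/-- Quotient (state) complexity: the number of distinct left quotients of `L`. -/
noncomputable def quotCompl {α : Type*} (L : Set (List α)) : ℕ :=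
  Nat.card (Set.range (leftQ L))

/-- The syntactic (Myhill) congruence of `L`. -/
def synRel {α : Type*} (L : Set (List α)) (x y : List α) : Prop :=
  ∀ u v : List α, u ++ x ++ v ∈ L ↔ u ++ y ++ v ∈ L

/-- The syntactic setoid on the free semigroup of non-empty words. -/
def synSetoid {α : Type*} (L : Set (List α)) : Setoid {w : List α // w ≠ []} :=
  ⟨fun x y => synRel L x.1 y.1,
   ⟨fun _ _ _ => Iff.rfl, fun h u v => (h u v).symm,
    fun h₁ h₂ u v => (h₁ u v).trans (h₂ u v)⟩⟩

/-- Syntactic complexity: the cardinality of the syntactic semigroup of `L`. -/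
noncomputable def synCompl {α : Type*} (L : Set (List α)) : ℕ :=
  Nat.card (Quotient (synSetoid L))

/-!
The witness is the DFA on `n` states whose three letters act as the cycle `i ↦ i + 1`, the
transposition `(0 1)` and the idempotent sending `1` to `0`. A cycle and an adjacent
transposition generate the symmetric group, and conjugating the idempotent by permutations
gives every map collapsing one point onto another; any non-bijective map factors as such a
collapse followed by a map of strictly larger image, so the three letters generate all `n ^ n`
transformations. Consequently every state is reachable and, with `{0}` accepting, any two states
are separated by a word, so the DFA is minimal: the quotients are the `n` state languages, and the
syntactic semigroup is the transition semigroup, i.e. the full transformation monoid.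
-/

open Equiv Function

namespace Function.End

variable {σ : Type*} [DecidableEq σ]

theorem update_id_eq_conj (g : Perm σ) (a b : σ) :
    update id a b = ⇑g⁻¹ ∘ update id (g a) (g b) ∘ ⇑g := by
  funext i
  by_cases hi : i = a
  · simp [hi]
  · simp [update_of_ne hi, update_of_ne (g.injective.ne hi)]

theorem exists_comp_update_id_of_not_surjective [Fintype σ] {f : σ → σ}
    (hf : ¬ Surjective f) : ∃ (a b : σ) (g : σ → σ), f = g ∘ update id b a ∧
      (Finset.univ.image f).card < (Finset.univ.image g).card := by
  obtain ⟨a, b, hfab, hab⟩ : ∃ a b, f a = f b ∧ a ≠ b := by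
    simpa [Injective] using mt Finite.injective_iff_surjective.mp hf
  obtain ⟨c, hc⟩ : ∃ c, c ∉ Finset.univ.image f := by simpa [Surjective] using hf
  -- the new image value `c` comes from `b`, while the old value `f b` is still hit by `a`
  refine ⟨a, b, update f b c, ?_, Finset.card_lt_card ?_⟩
  · funext i
    by_cases hi : i = b
    · simp [hi, update_of_ne hab, hfab]
    · simp [update_of_ne hi]
  · refine Finset.ssubset_iff.mpr ⟨c, hc, Finset.insert_subset ?_ ?_⟩
    · exact Finset.mem_image.mpr ⟨b, Finset.mem_univ _, update_self b c f⟩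
    · intro y hy
      obtain ⟨i, -, rfl⟩ := Finset.mem_image.mp hy
      by_cases hi : i = b
      · subst hi
        exact Finset.mem_image.mpr ⟨a, Finset.mem_univ _, by simp [update_of_ne hab, hfab]⟩
      · exact Finset.mem_image.mpr ⟨i, Finset.mem_univ _, update_of_ne hi c f⟩

theorem submonoid_eq_top_of_perm_mem_of_update_mem [Finite σ] {S : Submonoid (Function.End σ)}
    (hperm : ∀ f : Function.End σ, Bijective f → f ∈ S)
    (hupdate : ∀ a b : σ, (update id a b : Function.End σ) ∈ S) : S = ⊤ := by
  have := Fintype.ofFinite σ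
  rw [eq_top_iff]
  rintro f -
  induction hk : Fintype.card σ - (Finset.univ.image f).card using Nat.strong_induction_on
    generalizing f with
  | _ k ih =>
    by_cases hf : Surjective f
    · exact hperm f (Finite.surjective_iff_bijective.mp hf)
    obtain ⟨a, b, g, rfl, hlt⟩ := exists_comp_update_id_of_not_surjective hf
    have hg := Finset.card_le_univ (Finset.univ.image g)
    exact S.mul_mem (ih _ (by omega) rfl) (hupdate b a)

theorem closure_cycle_swap_update_eq_top [Fintype σ] {c : Perm σ} (hc : c.IsCycle)
    (hsupp : c.support = Finset.univ) (x : σ) :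
    Submonoid.closure
      ({⇑c, ⇑(Equiv.swap x (c x)), update id (c x) x} : Set (Function.End σ)) = ⊤ := by
  set S :=
    Submonoid.closure ({⇑c, ⇑(Equiv.swap x (c x)), update id (c x) x} : Set (Function.End σ))
  have hperm (f : Function.End σ) (hf : Bijective f) : f ∈ S := by
    have hg : Equiv.ofBijective f hf ∈ Submonoid.closure {c, Equiv.swap x (c x)} := by
      rw [← Subgroup.closure_toSubmonoid_of_finite, Perm.closure_cycle_adjacent_swap hc hsupp x]
      trivial
    have hle : Submonoid.closure {c, Equiv.swap x (c x)} ≤ S.comap MulAction.toEndHom := by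
      rw [Submonoid.closure_le]
      rintro _ (rfl | rfl)
      · exact Submonoid.subset_closure (Set.mem_insert _ _)
      · exact Submonoid.subset_closure (Set.mem_insert_of_mem _ (Set.mem_insert _ _))
    exact hle hg
  have hx : c x ≠ x := Perm.mem_support.mp (hsupp ▸ Finset.mem_univ x)
  refine submonoid_eq_top_of_perm_mem_of_update_mem hperm fun a b => ?_
  rcases eq_or_ne a b with rfl | hab
  · exact (update_eq_self a id).symm ▸ S.one_mem
  obtain ⟨g, hga, hgb⟩ :=
    MulAction.is_two_pretransitive_iff.mp (Perm.isMultiplyPretransitive σ 2) hab hx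
  rw [Perm.smul_def] at hga hgb
  have hupdate : update id (c x) x ∈ S :=
    Submonoid.subset_closure (Set.mem_insert_of_mem _ (Set.mem_insert_of_mem _ rfl))
  rw [update_id_eq_conj g, hga, hgb]
  exact S.mul_mem (hperm _ g⁻¹.bijective) (S.mul_mem hupdate (hperm _ g.bijective))

end Function.End

theorem synRel_iff_forall_leftQ_append {α : Type*} {L : Set (List α)} {x y : List α} :
    synRel L x y ↔ ∀ u, leftQ L (u ++ x) = leftQ L (u ++ y) := by
  simp [synRel, Set.ext_iff, leftQ, List.append_assoc]

namespace DFA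

variable {α σ : Type*} (M : DFA α σ)

def transitionMonoid : Submonoid (Function.End σ) where
  carrier := {f | ∃ w, (M.evalFrom · w) = f}
  one_mem' := ⟨[], rfl⟩
  mul_mem' := by
    rintro _ _ ⟨u, rfl⟩ ⟨v, rfl⟩
    exact ⟨v ++ u, funext fun s => M.evalFrom_of_append s v u⟩

theorem eval_append (u x : List α) : M.eval (u ++ x) = M.evalFrom (M.eval u) x :=
  M.evalFrom_of_append _ u x

theorem step_mem_transitionMonoid (a : α) : (M.step · a) ∈ M.transitionMonoid := ⟨[a], rfl⟩

theorem leftQ_preimage_eval (w : List α) :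
    leftQ (M.eval ⁻¹' M.accept) w = M.evalFrom (M.eval w) ⁻¹' M.accept := by
  ext x
  simp [leftQ, eval_append]

theorem range_leftQ_preimage_eval (hreach : Surjective M.eval) :
    Set.range (leftQ (M.eval ⁻¹' M.accept)) = Set.range fun s => M.evalFrom s ⁻¹' M.accept := by
  rw [funext M.leftQ_preimage_eval, ← hreach.range_comp]
  rfl

theorem quotCompl_preimage_eval (hreach : Surjective M.eval)
    (hmin : Injective fun s => M.evalFrom s ⁻¹' M.accept) :
    quotCompl (M.eval ⁻¹' M.accept) = Nat.card σ := by
  rw [quotCompl, M.range_leftQ_preimage_eval hreach, Nat.card_range_of_injective hmin]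

theorem synRel_preimage_eval_iff (hreach : Surjective M.eval)
    (hmin : Injective fun s => M.evalFrom s ⁻¹' M.accept) {x y : List α} :
    synRel (M.eval ⁻¹' M.accept) x y ↔ (M.evalFrom · x) = (M.evalFrom · y) := by
  simp only [synRel_iff_forall_leftQ_append, leftQ_preimage_eval, eval_append]
  constructor
  · intro h
    funext s
    obtain ⟨u, rfl⟩ := hreach s
    exact hmin (h u)
  · intro h u
    rw [congrFun h]

theorem synCompl_preimage_eval (hreach : Surjective M.eval)
    (hmin : Injective fun s => M.evalFrom s ⁻¹' M.accept) :
    synCompl (M.eval ⁻¹' M.accept) =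
      Nat.card (Set.range fun w : {w : List α // w ≠ []} => (M.evalFrom · w.1)) := by
  have hker : synSetoid (M.eval ⁻¹' M.accept) =
      Setoid.ker fun w : {w : List α // w ≠ []} => (M.evalFrom · w.1) :=
    Setoid.ext fun x y => M.synRel_preimage_eval_iff hreach hmin
  rw [synCompl, hker]
  exact Nat.card_congr (Setoid.quotientKerEquivRange _)

section FullTransformations

variable {M}

theorem eval_surjective_of_transitionMonoid_eq_top (htop : M.transitionMonoid = ⊤) :
    Surjective M.eval := fun s => by
  obtain ⟨w, hw⟩ : (fun _ => s : Function.End σ) ∈ M.transitionMonoid := htop ▸ trivial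
  exact ⟨w, congrFun hw M.start⟩

theorem injective_preimage_accept_of_transitionMonoid_eq_top [DecidableEq σ]
    (htop : M.transitionMonoid = ⊤) {q : σ} (hq : M.accept = {q}) :
    Injective fun s => M.evalFrom s ⁻¹' M.accept := by
  intro j k (hjk : M.evalFrom j ⁻¹' M.accept = M.evalFrom k ⁻¹' M.accept)
  obtain ⟨w, hw⟩ : (⇑(Equiv.swap j q) : Function.End σ) ∈ M.transitionMonoid := htop ▸ trivial
  have hw := congrFun hw
  have hj : w ∈ M.evalFrom j ⁻¹' M.accept := by simp [hw, hq]
  rw [hjk] at hj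
  have hk : Equiv.swap j q k = q := by simpa [hw, hq] using hj
  rw [Equiv.swap_apply_eq_iff, Equiv.swap_apply_right] at hk
  exact hk.symm

theorem range_evalFrom_ne_nil_eq_univ (htop : M.transitionMonoid = ⊤) {a : α}
    (ha : Bijective (M.step · a)) :
    Set.range (fun w : {w : List α // w ≠ []} => (M.evalFrom · w.1)) = Set.univ := by
  refine Set.eq_univ_of_forall fun f => ?_
  set e := Equiv.ofBijective _ ha
  obtain ⟨w, hw⟩ : (⇑e.symm ∘ f : Function.End σ) ∈ M.transitionMonoid := htop ▸ trivial
  refine ⟨⟨w ++ [a], by simp⟩, funext fun s => ?_⟩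
  simp only [evalFrom_append_singleton, congrFun hw, Function.comp_apply]
  exact e.apply_symm_apply (f s)

end FullTransformations

end DFA

open DFA

def fullTransformationDFA (m : ℕ) : DFA (Fin 3) (Fin (m + 1)) where
  step s a := ![⇑(finRotate (m + 1)), ⇑(Equiv.swap 0 1), update id 1 0] a s
  start := 0
  accept := {0}

theorem transitionMonoid_fullTransformationDFA (m : ℕ) :
    (fullTransformationDFA m).transitionMonoid = ⊤ := by
  cases m with
  | zero =>
    refine eq_top_iff.mpr fun f _ => ?_
    have hf : f = 1 := funext fun _ => Subsingleton.elim (α := Fin 1) _ _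
    exact hf ▸ one_mem _
  | succ k =>
    rw [eq_top_iff, ← Function.End.closure_cycle_swap_update_eq_top isCycle_finRotate
      support_finRotate 0, Submonoid.closure_le]
    simp only [finRotate_apply, zero_add]
    rintro _ (rfl | rfl | rfl)
    · exact step_mem_transitionMonoid _ 0
    · exact step_mem_transitionMonoid _ 1
    · exact step_mem_transitionMonoid _ 2

/-- For every `n ≥ 1` there is a regular language over a
three-letter alphabet with quotient complexity `n` and syntactic complexity
`n ^ n`. -/
theorem stmt_2 (n : ℕ) (hn : 1 ≤ n) :
    ∃ L : Set (List (Fin 3)), (Set.range (leftQ L)).Finite ∧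
      quotCompl L = n ∧ synCompl L = n ^ n := by
  obtain ⟨m, rfl⟩ : ∃ m, n = m + 1 := ⟨n - 1, by omega⟩
  set M := fullTransformationDFA m
  have htop := transitionMonoid_fullTransformationDFA m
  have hreach := eval_surjective_of_transitionMonoid_eq_top htop
  have hmin := injective_preimage_accept_of_transitionMonoid_eq_top htop rfl
  refine ⟨M.eval ⁻¹' M.accept, ?_, ?_, ?_⟩
  · rw [M.range_leftQ_preimage_eval hreach]
    exact Set.finite_range _
  · rw [M.quotCompl_preimage_eval hreach hmin, Nat.card_fin]
  · rw [M.synCompl_preimage_eval hreach hmin,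
      range_evalFrom_ne_nil_eq_univ htop (a := 0) (finRotate (m + 1)).bijective,
      Nat.card_univ, Nat.card_fun, Nat.card_fin]
end

section
/- Let L be a regular language over a finite alphabet Σ with quotient complexity κ(L) = n. If the empty language ∅ is a left quotient of L, or if Σ* is a left quotient of L, then σ(L) ≤ n^{n-1}. -/
lemma leftQ_leftQ {α : Type*} (L : Set (List α)) (u x : List α) :
    leftQ (leftQ L u) x = leftQ L (u ++ x) := by
  ext z; simp [leftQ, List.append_assoc]

/-- The transition map on quotients induced by a word. -/
noncomputable def stepQ {α : Type*} (L : Set (List α)) (x : List α)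
    (q : Set.range (leftQ L)) : Set.range (leftQ L) :=
  ⟨leftQ q.1 x, by
    obtain ⟨u, hu⟩ := q.2
    exact ⟨u ++ x, by rw [← leftQ_leftQ, hu]⟩⟩

/-- If `L` has `∅` or `Σ*` as a left quotient, then
`σ(L) ≤ n^{n-1}` where `n = κ(L)`. -/
theorem stmt_3 {α : Type*} [Fintype α] (L : Set (List α))
    (hreg : (Set.range (leftQ L)).Finite) (n : ℕ) (hn : quotCompl L = n)
    (h : (∃ w : List α, leftQ L w = (∅ : Set (List α))) ∨
         (∃ w : List α, leftQ L w = (Set.univ : Set (List α)))) :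
    synCompl L ≤ n ^ (n - 1) := by
  classical
  subst hn
  obtain ⟨S, hSmem, hSfix⟩ :
      ∃ S : Set (List α), S ∈ Set.range (leftQ L) ∧ ∀ x : List α, leftQ S x = S := by
    rcases h with ⟨w, hw⟩ | ⟨w, hw⟩
    · exact ⟨∅, ⟨w, hw⟩, fun x => by ext z; simp [leftQ]⟩
    · exact ⟨Set.univ, ⟨w, hw⟩, fun x => by ext z; simp [leftQ]⟩
  haveI : Fintype (Set.range (leftQ L)) := hreg.fintype
  set Q := Set.range (leftQ L) with hQ
  set q₀ : Q := ⟨S, hSmem⟩ with hq₀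
  -- the map from the syntactic semigroup into functions on Q \ {q₀}
  have hresp : ∀ (x y : {w : List α // w ≠ []}), synRel L x.1 y.1 →
      (fun q : {q : Q // q ≠ q₀} => stepQ L x.1 q.1)
        = (fun q : {q : Q // q ≠ q₀} => stepQ L y.1 q.1) := by
    intro x y hxy
    funext q
    apply Subtype.ext
    show leftQ q.1.1 x.1 = leftQ q.1.1 y.1
    obtain ⟨u, hu⟩ := q.1.2
    rw [← hu]
    ext v
    simpa [leftQ, List.append_assoc] using hxy u v
  set F : Quotient (synSetoid L) → ({q : Q // q ≠ q₀} → Q) :=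
    Quotient.lift (fun x : {w : List α // w ≠ []} =>
      fun q : {q : Q // q ≠ q₀} => stepQ L x.1 q.1) hresp with hF
  have hFinj : Function.Injective F := by
    intro a b
    refine Quotient.inductionOn₂ a b ?_
    intro x y hxy
    apply Quotient.sound
    intro u v
    have hq : leftQ (leftQ L u) x.1 = leftQ (leftQ L u) y.1 := by
      by_cases hc : (⟨leftQ L u, ⟨u, rfl⟩⟩ : Q) = q₀
      · have hS : leftQ L u = S := congrArg Subtype.val hc
        rw [hS, hSfix, hSfix]
      · have := congrFun hxy ⟨⟨leftQ L u, ⟨u, rfl⟩⟩, hc⟩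
        exact congrArg Subtype.val this
    have h1 : (u ++ x.1 ++ v ∈ L) ↔ v ∈ leftQ (leftQ L u) x.1 := by
      simp [leftQ, List.append_assoc]
    have h2 : (u ++ y.1 ++ v ∈ L) ↔ v ∈ leftQ (leftQ L u) y.1 := by
      simp [leftQ, List.append_assoc]
    rw [h1, h2, hq]
  have hcard1 : Nat.card ({q : Q // q ≠ q₀} → Q) = Nat.card Q ^ Nat.card {q : Q // q ≠ q₀} :=
    Nat.card_fun
  have hcard2 : Nat.card {q : Q // q ≠ q₀} = Nat.card Q - 1 := by
    simp only [Nat.card_eq_fintype_card]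
    have : Fintype.card {q : Q // ¬ (q = q₀)} = Fintype.card Q - Fintype.card {q : Q // q = q₀} :=
      Fintype.card_subtype_compl _
    simp only [Fintype.card_subtype_eq] at this
    exact this
  calc synCompl L ≤ Nat.card ({q : Q // q ≠ q₀} → Q) :=
        Nat.card_le_card_of_injective F hFinj
    _ = quotCompl L ^ (quotCompl L - 1) := by
        rw [hcard1, hcard2]; rfl
end

section
/- Let L be a regular language over a finite alphabet Σ with quotient complexity κ(L) = n. If the language {ε} is a left quotient of L, or if Σ⁺ (the set of all non-empty words) is a left quotient of L, then σ(L) ≤ n^{n-2}. -/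
/-- action of a word on quotient sets -/
def stepW {α : Type*} (x : List α) (S : Set (List α)) : Set (List α) :=
  {z | x ++ z ∈ S}

lemma leftQ_append {α : Type*} (L : Set (List α)) (w x : List α) :
    leftQ L (w ++ x) = stepW x (leftQ L w) := by
  ext z; simp [leftQ, stepW, List.append_assoc]

lemma aux_bound {α : Type*} (a : α) (L : Set (List α))
    (hreg : (Set.range (leftQ L)).Finite)
    (A B : Set (List α)) (hAB : A ≠ B) (w0 : List α) (hw0 : leftQ L w0 = A)
    (hstepA : ∀ x : List α, x ≠ [] → stepW x A = B)
    (hstepB : ∀ x : List α, stepW x B = B) :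
    synCompl L ≤ quotCompl L ^ (quotCompl L - 2) := by
  classical
  set Q := Set.range (leftQ L) with hQ
  haveI : Fintype Q := hreg.fintype
  have hA : A ∈ Q := ⟨w0, hw0⟩
  have hB : B ∈ Q := ⟨w0 ++ [a], by rw [leftQ_append, hw0]; exact hstepA [a] (by simp)⟩
  set q0 : Q := ⟨A, hA⟩ with hq0
  set q1 : Q := ⟨B, hB⟩ with hq1
  have hq01 : q0 ≠ q1 := fun hh => hAB (congrArg Subtype.val hh)
  -- transformation induced by a word
  have tmem : ∀ (x : List α) (q : Q), stepW x q.1 ∈ Q := by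
    rintro x ⟨q, w, hw⟩
    exact ⟨w ++ x, by rw [leftQ_append, hw]⟩
  let tQ : List α → Q → Q := fun x q => ⟨stepW x q.1, tmem x q⟩
  let S := {f : Q → Q // f q0 = q1 ∧ f q1 = q1}
  -- map from syntactic semigroup to S
  have wd : ∀ (x y : {w : List α // w ≠ []}), synRel L x.1 y.1 → tQ x.1 = tQ y.1 := by
    intro x y hxy
    funext q
    obtain ⟨w, hw⟩ := q.2
    apply Subtype.ext
    show stepW x.1 q.1 = stepW y.1 q.1
    rw [← hw, ← leftQ_append, ← leftQ_append]
    ext v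
    simpa [leftQ, List.append_assoc] using hxy w v
  let F : Quotient (synSetoid L) → S :=
    Quotient.lift (fun x => (⟨tQ x.1,
      Subtype.ext (hstepA x.1 x.2),
      Subtype.ext (hstepB x.1)⟩ : S)) (fun x y hxy => Subtype.ext (wd x y hxy))
  have Finj : Function.Injective F := by
    intro x y
    refine Quotient.inductionOn₂ x y ?_
    intro x y hxy
    apply Quotient.sound
    intro u v
    have h1 : tQ x.1 = tQ y.1 := congrArg Subtype.val hxy
    have h2 := congrArg Subtype.val (congrFun h1 ⟨leftQ L u, u, rfl⟩)
    have h3 : leftQ L (u ++ x.1) = leftQ L (u ++ y.1) := by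
      rw [leftQ_append, leftQ_append]; exact h2
    have : v ∈ leftQ L (u ++ x.1) ↔ v ∈ leftQ L (u ++ y.1) := by rw [h3]
    simpa [leftQ, List.append_assoc] using this
  have step1 : synCompl L ≤ Nat.card S :=
    Nat.card_le_card_of_injective F Finj
  -- count S
  let sub := {q : Q // q ≠ q0 ∧ q ≠ q1}
  let G : S → (sub → Q) := fun f q => f.1 q.1
  have Ginj : Function.Injective G := by
    intro f g hfg
    apply Subtype.ext
    funext q
    by_cases h0 : q = q0
    · rw [h0, f.2.1, g.2.1]
    by_cases h1 : q = q1
    · rw [h1, f.2.2, g.2.2]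
    exact congrFun hfg ⟨q, h0, h1⟩
  have step2 : Nat.card S ≤ Nat.card (sub → Q) :=
    Nat.card_le_card_of_injective G Ginj
  have hcardfun : Nat.card (sub → Q) = Nat.card Q ^ Nat.card sub := Nat.card_fun
  have hm : Fintype.card sub ≤ Fintype.card Q - 2 := by
    have hlt : Fintype.card sub < Fintype.card {q : Q // q ≠ q0} := by
      apply Fintype.card_lt_of_injective_of_notMem
        (f := fun q : sub => (⟨q.1, q.2.1⟩ : {q : Q // q ≠ q0}))
      · intro x y hxy
        exact Subtype.ext (by simpa using congrArg Subtype.val hxy)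
      · show (⟨q1, Ne.symm hq01⟩ : {q : Q // q ≠ q0}) ∉ _
        rintro ⟨q, hq⟩
        exact q.2.2 (congrArg Subtype.val hq)
    have hc1 : Fintype.card {q : Q // q ≠ q0} = Fintype.card Q - 1 := by
      rw [Fintype.card_subtype_compl, Fintype.card_subtype_eq]
    omega
  have hn1 : 1 ≤ Nat.card Q := by
    rw [Nat.card_eq_fintype_card]
    exact Fintype.card_pos_iff.mpr ⟨q0⟩
  calc synCompl L ≤ Nat.card (sub → Q) := step1.trans step2
    _ = Nat.card Q ^ Nat.card sub := hcardfun
    _ ≤ Nat.card Q ^ (Nat.card Q - 2) := by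
        apply Nat.pow_le_pow_right hn1
        simpa [Nat.card_eq_fintype_card] using hm
    _ = quotCompl L ^ (quotCompl L - 2) := rfl

/-- If `L` has `{ε}` or `Σ⁺` as a left quotient, then
`σ(L) ≤ n^{n-2}` where `n = κ(L)`. -/
theorem stmt_4 {α : Type*} [Fintype α] (L : Set (List α))
    (hreg : (Set.range (leftQ L)).Finite) (n : ℕ) (hn : quotCompl L = n)
    (h : (∃ w : List α, leftQ L w = {x : List α | x = []}) ∨
         (∃ w : List α, leftQ L w = {x : List α | x ≠ []})) :
    synCompl L ≤ n ^ (n - 2) := by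
  subst hn
  rcases isEmpty_or_nonempty α with hα | hne
  · haveI : IsEmpty {w : List α // w ≠ []} := by
      constructor
      rintro ⟨w, hw⟩
      cases w with
      | nil => exact hw rfl
      | cons x _ => exact (IsEmpty.false x).elim
    have : synCompl L = 0 := by
      simp [synCompl, Nat.card_of_isEmpty]
    simp [this]
  obtain ⟨a⟩ := hne
  rcases h with ⟨w, hw⟩ | ⟨w, hw⟩
  · refine aux_bound a L hreg {x : List α | x = []} ∅ ?_ w hw ?_ ?_
    · intro hh
      have : ([] : List α) ∈ (∅ : Set (List α)) := hh ▸ (by simp)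
      exact this
    · intro x hx
      ext z
      simp [stepW, hx]
    · intro x
      ext z
      simp [stepW]
  · refine aux_bound a L hreg {x : List α | x ≠ []} Set.univ ?_ w hw ?_ ?_
    · intro hh
      have : ([] : List α) ∈ {x : List α | x ≠ []} := hh ▸ Set.mem_univ _
      exact this rfl
    · intro x hx
      ext z
      simp [stepW, hx]
    · intro x
      ext z
      simp [stepW]
end

section
/- If L is a right ideal over a finite alphabet Σ with quotient complexity κ(L) = n, then its syntactic complexity satisfies σ(L) ≤ n^{n-1}. -/
/-- `L` is a right ideal: it is non-empty and `L = LΣ*`. -/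
def IsRightIdeal {α : Type*} (L : Set (List α)) : Prop :=
  L.Nonempty ∧ L = {x | ∃ u ∈ L, ∃ v : List α, x = u ++ v}

/-- `L` is a left ideal: it is non-empty and `L = Σ*L`. -/
def IsLeftIdeal {α : Type*} (L : Set (List α)) : Prop :=
  L.Nonempty ∧ L = {x | ∃ u : List α, ∃ v ∈ L, x = u ++ v}

/-- `L` is a two-sided ideal: it is non-empty and `L = Σ*LΣ*`. -/
def IsTwoSidedIdeal {α : Type*} (L : Set (List α)) : Prop :=
  L.Nonempty ∧ L = {x | ∃ u : List α, ∃ w ∈ L, ∃ v : List α, x = u ++ w ++ v}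

/-- The reverse of a language. -/
def langReverse {α : Type*} (L : Set (List α)) : Set (List α) :=
  List.reverse '' L

/-- A right ideal with quotient complexity `n` has syntactic
complexity at most `n^{n-1}`. -/
theorem stmt_7 {α : Type*} [Fintype α] (L : Set (List α))
    (hreg : (Set.range (leftQ L)).Finite) (n : ℕ) (hn : quotCompl L = n)
    (hL : IsRightIdeal L) :
    synCompl L ≤ n ^ (n - 1) := by
  classical
  subst hn
  haveI : Finite (Set.range (leftQ L)) := hreg.to_subtype
  haveI : Fintype (Set.range (leftQ L)) := Fintype.ofFinite _
  obtain ⟨w0, hw0⟩ := hL.1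
  set Q := Set.range (leftQ L) with hQdef
  have huniv : (Set.univ : Set (List α)) ∈ Q := by
    refine ⟨w0, ?_⟩
    ext x
    simp only [leftQ, Set.mem_setOf_eq, Set.mem_univ, iff_true]
    rw [hL.2]
    exact ⟨w0, hw0, x, rfl⟩
  set e0 : Q := ⟨Set.univ, huniv⟩ with he0
  have hg : ∀ (w : List α) (q : Q), {x | w ++ x ∈ (q : Set (List α))} ∈ Q := by
    rintro w ⟨_, u, rfl⟩
    exact ⟨u ++ w, by ext x; simp [leftQ, List.append_assoc]⟩
  -- the map to transformations fixing e0
  let T := {f : Q → Q // f e0 = e0}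
  let Φ : Quotient (synSetoid L) → T :=
    Quotient.lift
      (fun w : {w : List α // w ≠ []} =>
        (⟨fun q => ⟨{x | w.1 ++ x ∈ (q : Set (List α))}, hg w.1 q⟩, by
          apply Subtype.ext; simp [he0]⟩ : T))
      (by
        rintro ⟨w, hw⟩ ⟨w', hw'⟩ hww
        apply Subtype.ext
        funext q
        obtain ⟨qv, u, rfl⟩ := q
        apply Subtype.ext
        ext x
        simpa [leftQ, List.append_assoc] using hww u x)
  have hΦinj : Function.Injective Φ := by
    intro a b hab
    obtain ⟨w, rfl⟩ := Quotient.exists_rep a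
    obtain ⟨w', rfl⟩ := Quotient.exists_rep b
    apply Quotient.sound
    intro u v
    have := congrArg (fun f : T => ((f.1 ⟨leftQ L u, u, rfl⟩ : Q) : Set (List α))) hab
    simp only [Φ, Quotient.lift_mk] at this
    have hv := Set.ext_iff.mp this v
    simpa [leftQ, List.append_assoc] using hv
  haveI : Finite T := Subtype.finite
  have h1 : synCompl L ≤ Nat.card T := Nat.card_le_card_of_injective Φ hΦinj
  have h2 : Nat.card T = quotCompl L ^ (quotCompl L - 1) := by
    have e : T ≃ ({q : Q // q ≠ e0} → Q) :=
      { toFun := fun f q => f.1 q.1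
        invFun := fun g => ⟨fun q => if h : q = e0 then e0 else g ⟨q, h⟩, by simp⟩
        left_inv := fun f => by
          ext q
          by_cases h : q = e0
          · simp [h, f.2]
          · simp [h]
        right_inv := fun g => by
          ext q
          simp [q.2] }
    rw [Nat.card_congr e, Nat.card_fun]
    have h3 : Nat.card {q : Q // q ≠ e0} = Nat.card Q - 1 := by
      have : Fintype.card {q : Q // ¬ q = e0} = Fintype.card Q - 1 := by
        rw [Fintype.card_subtype_compl, Fintype.card_subtype_eq]
      rw [Nat.card_eq_fintype_card, Nat.card_eq_fintype_card]
      exact this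
    rw [h3]
    rfl
  exact h1.trans (le_of_eq h2)
end

section
/- If L is a prefix-closed regular language over a finite alphabet Σ with quotient complexity κ(L) = n, then its syntactic complexity satisfies σ(L) ≤ n^{n-1}. -/
/-- A prefix-closed regular language with quotient complexity
`n` has syntactic complexity at most `n^{n-1}`. -/
theorem stmt_8 {α : Type*} [Fintype α] (L : Set (List α))
    (hreg : (Set.range (leftQ L)).Finite) (n : ℕ) (hn : quotCompl L = n)
    (hL : ∀ w ∈ L, ∀ u : List α, u <+: w → u ∈ L) :
    synCompl L ≤ n ^ (n - 1) := by
  classical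
  have hne : (Set.range (leftQ L)).Nonempty := ⟨leftQ L [], ⟨[], rfl⟩⟩
  haveI : Finite ↥(Set.range (leftQ L)) := hreg.to_subtype
  haveI : Nonempty ↥(Set.range (leftQ L)) := hne.to_subtype
  have hn1 : 1 ≤ n := by
    rw [← hn]
    exact Nat.one_le_iff_ne_zero.mpr Nat.card_pos.ne'
  by_cases hemp : (∅ : Set (List α)) ∈ Set.range (leftQ L)
  · -- main case: the empty quotient is a fixed sink
    set Q := ↥(Set.range (leftQ L)) with hQ
    have hstep : ∀ (S : Set (List α)), S ∈ Set.range (leftQ L) → ∀ w : List α,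
        {x | w ++ x ∈ S} ∈ Set.range (leftQ L) := by
      rintro S ⟨u, rfl⟩ w
      exact ⟨u ++ w, by ext x; simp [leftQ, List.append_assoc]⟩
    let q0 : Q := ⟨∅, hemp⟩
    let F : List α → Q → Q := fun w q => ⟨{x | w ++ x ∈ q.1}, hstep q.1 q.2 w⟩
    have hF0 : ∀ w, F w q0 = q0 := by
      intro w
      apply Subtype.ext
      simp [F, q0]
    let T := {f : Q → Q // f q0 = q0}
    have hwd : ∀ (x y : {w : List α // w ≠ []}), synRel L x.1 y.1 →
        (⟨F x.1, hF0 x.1⟩ : T) = ⟨F y.1, hF0 y.1⟩ := by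
      intro x y h
      apply Subtype.ext
      funext q
      obtain ⟨S, hS⟩ := q
      obtain ⟨u, rfl⟩ := hS
      apply Subtype.ext
      ext a
      have := h u a
      simp only [leftQ, Set.mem_setOf_eq, List.append_assoc] at this ⊢
      exact this
    let Fbar : Quotient (synSetoid L) → T :=
      Quotient.lift (fun w : {w : List α // w ≠ []} => (⟨F w.1, hF0 w.1⟩ : T)) hwd
    have hinj : Function.Injective Fbar := by
      intro a b
      induction a using Quotient.ind with | _ x =>
      induction b using Quotient.ind with | _ y =>
      intro h
      apply Quotient.sound
      intro u v
      have h' : F x.1 = F y.1 := congrArg Subtype.val h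
      have h2 : ({a | x.1 ++ a ∈ leftQ L u} : Set (List α)) =
          {a | y.1 ++ a ∈ leftQ L u} :=
        congrArg Subtype.val (congrFun h' ⟨leftQ L u, ⟨u, rfl⟩⟩)
      have h3 := Set.ext_iff.mp h2 v
      simp only [Set.mem_setOf_eq, leftQ, List.append_assoc] at h3 ⊢
      exact h3
    have hcard : synCompl L ≤ Nat.card T :=
      Nat.card_le_card_of_injective Fbar hinj
    -- compute Nat.card T
    let e : T ≃ ({q : Q // q ≠ q0} → Q) :=
      { toFun := fun f q => f.1 q.1
        invFun := fun g => ⟨fun q => if h : q = q0 then q0 else g ⟨q, h⟩, by simp⟩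
        left_inv := by
          intro f
          apply Subtype.ext
          funext q
          by_cases h : q = q0
          · simp [h, f.2]
          · simp [h]
        right_inv := by
          intro g
          funext q
          simp [q.2] }
    have hTcard : Nat.card T = n ^ (n - 1) := by
      have hQn : Nat.card Q = n := hn
      have hsub : Nat.card {q : Q // q ≠ q0} = n - 1 := by
        haveI := hreg.fintype
        rw [Nat.card_eq_fintype_card, Fintype.card_subtype_compl,
          Fintype.card_subtype_eq, ← Nat.card_eq_fintype_card]
        exact congrArg (· - 1) hn
      rw [Nat.card_congr e, Nat.card_fun, hQn, hsub]
    rw [← hTcard]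
    exact hcard
  · -- L = univ
    have huniv : ∀ w : List α, w ∈ L := by
      intro w
      have hne' : (leftQ L w).Nonempty :=
        Set.nonempty_iff_ne_empty.mpr (fun h => hemp ⟨w, h⟩)
      obtain ⟨x, hx⟩ := hne'
      exact hL _ hx w ⟨x, rfl⟩
    haveI : Subsingleton (Quotient (synSetoid L)) := by
      constructor
      intro a b
      induction a using Quotient.ind with | _ x =>
      induction b using Quotient.ind with | _ y =>
      apply Quotient.sound
      intro u v
      simp only [iff_true_intro (huniv _)]
    have : synCompl L ≤ 1 := by
      rcases isEmpty_or_nonempty (Quotient (synSetoid L)) with h | h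
      · simp [synCompl, Nat.card_of_isEmpty]
      · haveI : Unique (Quotient (synSetoid L)) := uniqueOfSubsingleton h.some
        simp [synCompl, Nat.card_unique]
    exact this.trans (Nat.one_le_pow _ _ (Nat.lt_of_lt_of_le Nat.zero_lt_one hn1))
end

section
/- For every n ≥ 4, let A_n be the deterministic finite automaton with state set {0,1,…,n-1}, alphabet {a,b,c,d}, initial state 0 and final state set {n-1}, where a acts as the cycle (0,1,…,n-2) fixing n-1, b acts as the transposition (0,1), c maps n-2 to 0 and fixes all other states, and d maps n-2 to n-1 and fixes all other states. Then the language L(A_n) is a right ideal with quotient complexity n and syntactic complexity exactly n^{n-1}. -/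
/-- The transition function of the automaton `𝒜_n` of Definition 1:
`a = (0,1,…,n-2)` fixing `n-1`, `b = (0,1)`, `c : n-2 ↦ 0`, `d : n-2 ↦ n-1`. -/
def step9 (n : ℕ) (hn : 4 ≤ n) : Fin n → Fin 4 → Fin n := fun q l =>
  if l.val = 0 then -- a : the cycle (0, 1, …, n-2), fixing n-1
    if q.val = n - 2 then ⟨0, by omega⟩
    else if _h : q.val = n - 1 then q
    else ⟨q.val + 1, by have := q.isLt; omega⟩
  else if l.val = 1 then -- b : the transposition (0, 1)
    if q.val = 0 then ⟨1, by omega⟩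
    else if q.val = 1 then ⟨0, by omega⟩
    else q
  else if l.val = 2 then -- c : n-2 ↦ 0, fixing all other states
    if q.val = n - 2 then ⟨0, by omega⟩ else q
  else -- d : n-2 ↦ n-1, fixing all other states
    if q.val = n - 2 then ⟨n - 1, by omega⟩ else q

/-!
The sink `n-1` is the only final state, so the language is a right ideal, and everything else
follows once the transition semigroup is known to consist of all maps fixing `n-1`. Conjugating
`b = (0 1)` by the cycle `a` gives every transposition of `{0, …, n-2}`, hence every permutation
fixing `n-1`; conjugating `c` and `d` by these gives every map `update id i j` with `i ≠ n-1`;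
and a non-injective map fixing `n-1` is such a collapse followed by a map with a larger range.
These maps reach and separate all states, so the automaton is minimal: its `n` states are the
quotients, and the syntactic semigroup is the transition semigroup, of size `n ^ (n-1)`.
-/

open Equiv
open Function hiding swap

theorem Submonoid.inv_mem_of_finite {G : Type*} [Group G] [Finite G] (H : Submonoid G) {x : G}
    (hx : x ∈ H) : x⁻¹ ∈ H := by
  obtain ⟨k, hk⟩ := mem_powers_iff_mem_zpowers.mpr (inv_mem (Subgroup.mem_zpowers x))
  exact hk ▸ pow_mem hx k

section Permutations

variable {α : Type*} [DecidableEq α]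

theorem swap_mem_trans (H : Submonoid (Perm α)) {x y w : α}
    (hxy : swap x y ∈ H) (hyw : swap y w ∈ H) : swap x w ∈ H := by
  rcases eq_or_ne x y with rfl | hxy'
  · exact hyw
  rcases eq_or_ne x w with rfl | hxw
  · exact swap_self x ▸ H.one_mem
  rw [swap_comm, ← swap_mul_swap_mul_swap hxy' hxw]
  exact mul_mem (mul_mem hyw hxy) hyw

theorem mem_of_forall_swap_mem [Finite α] (H : Submonoid (Perm α)) (z : α)
    (hswap : ∀ x y, x ≠ z → y ≠ z → swap x y ∈ H) (σ : Perm α) (hσ : σ z = z) : σ ∈ H := by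
  have hfix : ∀ x, σ x ≠ z ↔ x ≠ z := fun x => σ.injective.ne_iff' hσ
  rw [← Perm.ofSubtype_subtypePerm (p := (· ≠ z)) hfix (by rintro x hx rfl; exact hx hσ)]
  generalize σ.subtypePerm (p := (· ≠ z)) hfix = τ
  induction τ using Perm.swap_induction_on with
  | one => rw [map_one]; exact H.one_mem
  | swap_mul τ x y _ hτ =>
    rw [map_mul, Perm.ofSubtype_swap_eq]
    exact mul_mem (hswap x y x.2 y.2) hτ

theorem exists_perm_fix_apply_eq_apply_eq {p q i j z : α} (hpq : p ≠ q) (hij : i ≠ j)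
    (hp : p ≠ z) (hq : q ≠ z) (hi : i ≠ z) (hj : j ≠ z) :
    ∃ π : Perm α, π z = z ∧ π p = i ∧ π q = j := by
  set s := swap p i
  have hsz : s z = z := swap_apply_of_ne_of_ne hp.symm hi.symm
  have hsqi : s q ≠ i := by simpa [s] using s.injective.ne hpq.symm
  have hsqz : s q ≠ z := hsz ▸ s.injective.ne hq
  refine ⟨swap (s q) j * s, ?_, ?_, by simp⟩
  · rw [Perm.mul_apply, hsz, swap_apply_of_ne_of_ne hsqz.symm hj.symm]
  · rw [Perm.mul_apply, swap_apply_left, swap_apply_of_ne_of_ne hsqi.symm hij]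

end Permutations

section Transformations

variable {α : Type*} [DecidableEq α]

theorem perm_comp_update_id_comp_inv (π : Perm α) (i j : α) :
    ⇑π ∘ update id i j ∘ ⇑π⁻¹ = update id (π i) (π j) := by
  funext x
  rcases eq_or_ne x (π i) with rfl | hx
  · simp
  · have : π.symm x ≠ i := fun h => hx (by rw [← h, apply_symm_apply])
    simp [update_of_ne hx, update_of_ne this]

theorem card_image_lt_card_image_update [Fintype α] {f : α → α} {i j k : α} (hf : f i = f j)
    (hij : i ≠ j) (hk : ∀ x, f x ≠ k) :
    (Finset.univ.image f).card < (Finset.univ.image (update f j k)).card := by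
  refine Finset.card_lt_card (Finset.ssubset_iff.mpr ⟨k, by simpa using hk, ?_⟩)
  intro y hy
  simp only [Finset.mem_insert, Finset.mem_image, Finset.mem_univ, true_and] at hy ⊢
  rcases hy with rfl | ⟨x, rfl⟩
  · exact ⟨j, update_self ..⟩
  rcases eq_or_ne x j with rfl | hx
  · exact ⟨i, by rw [update_of_ne hij, hf]⟩
  · exact ⟨x, update_of_ne hx ..⟩

variable {z : α} (S : Submonoid (Function.End α))

theorem update_id_mem (hperm : ∀ σ : Perm α, σ z = z → ⇑σ ∈ S) {p q : α} (hpq : p ≠ q)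
    (hp : p ≠ z) (hq : q ≠ z) (hcol : update id p q ∈ S) (hsink : update id p z ∈ S)
    (i j : α) (hi : i ≠ z) : update id i j ∈ S := by
  have hconj : ∀ π : Perm α, π z = z → ∀ {a b : α}, update id a b ∈ S →
      update id (π a) (π b) ∈ S := fun π hπ a b h => by
    rw [← perm_comp_update_id_comp_inv]
    exact mul_mem (hperm π hπ) (mul_mem h (hperm π⁻¹ (Perm.inv_eq_iff_eq.mpr hπ.symm)))
  rcases eq_or_ne i j with rfl | hij
  · exact (update_eq_self i id).symm ▸ S.one_mem
  rcases eq_or_ne j z with rfl | hj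
  · simpa [swap_apply_of_ne_of_ne hp.symm hi.symm] using
      hconj (swap p i) (swap_apply_of_ne_of_ne hp.symm hi.symm) hsink
  · obtain ⟨π, hπz, rfl, rfl⟩ := exists_perm_fix_apply_eq_apply_eq hpq hij hp hq hi hj
    exact hconj π hπz hcol

theorem mem_of_apply_eq_self [Fintype α] (hperm : ∀ σ : Perm α, σ z = z → ⇑σ ∈ S)
    (hupd : ∀ i j, i ≠ z → update id i j ∈ S) (f : α → α) (hf : f z = z) : f ∈ S := by
  by_cases hinj : Injective f
  · exact hperm (Equiv.ofBijective f hinj.bijective_of_finite) hf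
  obtain ⟨i, j, hfij, hij, hj⟩ : ∃ i j, f i = f j ∧ i ≠ j ∧ j ≠ z := by
    obtain ⟨a, b, hab, hne⟩ := Function.not_injective_iff.mp hinj
    rcases eq_or_ne b z with rfl | hb
    · exact ⟨b, a, hab.symm, hne.symm, hne⟩
    · exact ⟨a, b, hab, hne, hb⟩
  obtain ⟨k, hk⟩ : ∃ k, ∀ x, f x ≠ k := by
    simpa [Surjective] using mt Finite.injective_iff_surjective.mpr hinj
  have hf' : update f j k ∈ S :=
    mem_of_apply_eq_self hperm hupd (update f j k) (by rwa [update_of_ne hj.symm])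
  have hfac : f = update f j k ∘ update id j i := by
    funext x
    rcases eq_or_ne x j with rfl | hx
    · simp [update_of_ne hij, hfij]
    · simp [update_of_ne hx]
  exact hfac ▸ mul_mem hf' (hupd j i hj)
termination_by Fintype.card α - (Finset.univ.image f).card
decreasing_by
  have := card_image_lt_card_image_update hfij hij hk
  have := Finset.card_le_univ (Finset.univ.image (update f j k))
  omega

end Transformations

theorem card_fun_apply_eq_self {α : Type*} [Fintype α] [DecidableEq α] (z : α) :
    Nat.card {f : α → α // f z = z} = Nat.card α ^ (Nat.card α - 1) := by
  have e : {f : α → α // f z = z} ≃ {a // a = z} × ({a // a ≠ z} → α) :=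
    ((piSplitAt z fun _ => α).subtypeEquiv (q := fun p => p.1 = z) fun _ => Iff.rfl).trans
      (prodSubtypeFstEquivSubtypeProd (α := α) (β := {a // a ≠ z} → α) (p := (· = z)))
  rw [Nat.card_congr e]
  simp [Nat.card_eq_fintype_card, Fintype.card_subtype_compl]

namespace DFA

variable {α σ : Type*} (M : DFA α σ)

def transSemigroup : Subsemigroup (Function.End σ) where
  carrier := Set.range fun w : {w : List α // w ≠ []} => fun q => M.evalFrom q w.1
  mul_mem' := by
    rintro _ _ ⟨⟨w, hw⟩, rfl⟩ ⟨⟨v, hv⟩, rfl⟩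
    exact ⟨⟨v ++ w, by simp [hw]⟩, funext fun q => M.evalFrom_of_append q v w⟩

theorem leftQ_accepts (w : List α) : leftQ M.accepts w = M.acceptsFrom (M.eval w) := by
  ext x
  exact iff_of_eq (congrArg (· ∈ M.accept) (M.evalFrom_of_append M.start w x))

theorem eval_append_append (u x v : List α) :
    M.eval (u ++ x ++ v) = M.evalFrom (M.evalFrom (M.eval u) x) v := by
  rw [eval, evalFrom_of_append, evalFrom_of_append]

variable {M}

theorem evalFrom_mem_accept (hacc : ∀ q ∈ M.accept, ∀ a, M.step q a ∈ M.accept) {q : σ}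
    (hq : q ∈ M.accept) (w : List α) : M.evalFrom q w ∈ M.accept := by
  induction w generalizing q with
  | nil => exact hq
  | cons a w ih => exact ih (hacc q hq a)

theorem isRightIdeal_accepts (hne : (M.accepts : Set (List α)).Nonempty)
    (hacc : ∀ q ∈ M.accept, ∀ a, M.step q a ∈ M.accept) :
    IsRightIdeal (M.accepts : Set (List α)) := by
  refine ⟨hne, Set.ext fun x => ⟨fun hx => ⟨x, hx, [], (List.append_nil x).symm⟩, ?_⟩⟩
  rintro ⟨u, hu, v, rfl⟩
  change M.evalFrom M.start (u ++ v) ∈ M.accept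
  rw [evalFrom_of_append]
  exact evalFrom_mem_accept hacc hu v

theorem quotCompl_accepts (hreach : Surjective M.eval) (hdist : Injective M.acceptsFrom) :
    quotCompl (M.accepts : Set (List α)) = Nat.card σ := by
  have : Set.range (leftQ (M.accepts : Set (List α))) = Set.range M.acceptsFrom := by
    rw [← hreach.range_comp]
    exact congrArg Set.range (funext M.leftQ_accepts)
  unfold quotCompl
  rw [this]
  exact Nat.card_range_of_injective hdist

theorem synRel_accepts_iff (hreach : Surjective M.eval) (hdist : Injective M.acceptsFrom)
    (x y : List α) :
    synRel (M.accepts : Set (List α)) x y ↔ (M.evalFrom · x) = (M.evalFrom · y) := by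
  change (∀ u v, M.eval (u ++ x ++ v) ∈ M.accept ↔ M.eval (u ++ y ++ v) ∈ M.accept) ↔ _
  simp only [eval_append_append]
  refine ⟨fun h => funext fun q => ?_, fun h u v => congrFun h (M.eval u) ▸ Iff.rfl⟩
  obtain ⟨u, rfl⟩ := hreach q
  exact hdist (Set.ext (h u))

theorem synCompl_accepts (hreach : Surjective M.eval) (hdist : Injective M.acceptsFrom) :
    synCompl (M.accepts : Set (List α)) = Nat.card M.transSemigroup := by
  have : synSetoid (M.accepts : Set (List α)) =
      Setoid.ker fun w : {w : List α // w ≠ []} => fun q => M.evalFrom q w.1 :=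
    Setoid.ext fun x y => synRel_accepts_iff hreach hdist x.1 y.1
  unfold synCompl
  rw [this]
  exact Nat.card_congr (Setoid.quotientKerEquivRange _)

end DFA

section Automaton

variable (n : ℕ) (hn : 4 ≤ n)

def witnessDFA : DFA (Fin 4) (Fin n) :=
  { step := step9 n hn, start := ⟨0, by omega⟩, accept := {⟨n - 1, by omega⟩} }

namespace witnessDFA

def sink : Fin n := ⟨n - 1, by omega⟩

def penult : Fin n := ⟨n - 2, by omega⟩

theorem step_zero : (step9 n hn · 0) = ⇑(Fin.cycleRange (penult n hn)) := by
  funext q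
  have := q.isLt
  rcases lt_or_ge (penult n hn) q with hq | hq
  · rw [Fin.cycleRange_of_gt hq]
    simp only [penult, Fin.lt_def] at hq
    simp only [step9, Fin.ext_iff, apply_dite Fin.val, apply_ite Fin.val]
    split_ifs <;> omega
  · apply Fin.ext
    rw [Fin.coe_cycleRange_of_le hq]
    simp only [penult, Fin.le_def, Fin.ext_iff] at hq ⊢
    simp only [step9, apply_dite Fin.val, apply_ite Fin.val]
    split_ifs <;> omega

theorem step_one : (step9 n hn · 1) = ⇑(swap (⟨0, by omega⟩ : Fin n) ⟨1, by omega⟩) := by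
  funext q
  apply Fin.ext
  simp [step9, swap_apply_def, Fin.ext_iff, apply_ite Fin.val]

theorem step_two : (step9 n hn · 2) = update id (penult n hn) ⟨0, by omega⟩ := by
  funext q
  apply Fin.ext
  simp [step9, Function.update_apply, penult, Fin.ext_iff, apply_ite Fin.val]

theorem step_three : (step9 n hn · 3) = update id (penult n hn) (sink n hn) := by
  funext q
  apply Fin.ext
  simp [step9, Function.update_apply, penult, sink, Fin.ext_iff, apply_ite Fin.val]

theorem step_mem_accept :
    ∀ q ∈ (witnessDFA n hn).accept, ∀ l, (witnessDFA n hn).step q l ∈ (witnessDFA n hn).accept := by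
  rintro q rfl l
  fin_cases l <;> simp [witnessDFA, step9, show n - 1 ≠ n - 2 by omega,
    show n - 1 ≠ 0 by omega, show n ≠ 2 by omega]

theorem letter_mem (l : Fin 4) : (step9 n hn · l) ∈ (witnessDFA n hn).transSemigroup :=
  ⟨⟨[l], List.cons_ne_nil l []⟩, rfl⟩

def transMonoid : Submonoid (Function.End (Fin n)) where
  toSubsemigroup := (witnessDFA n hn).transSemigroup
  one_mem' := ⟨⟨[1, 1], List.cons_ne_nil _ _⟩, funext fun q => by
    change step9 n hn (step9 n hn q 1) 1 = q
    rw [congrFun (step_one n hn), congrFun (step_one n hn), swap_apply_self]⟩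

def transPerms : Submonoid (Perm (Fin n)) := (transMonoid n hn).comap MulAction.toEndHom

theorem mem_transPerms {σ : Perm (Fin n)} : σ ∈ transPerms n hn ↔ ⇑σ ∈ transMonoid n hn :=
  Iff.rfl

theorem cycleRange_mem : Fin.cycleRange (penult n hn) ∈ transPerms n hn := by
  rw [mem_transPerms, ← step_zero]
  exact letter_mem n hn 0

theorem swap_succ_mem : ∀ k (hk : k + 2 < n),
    swap (⟨k, by omega⟩ : Fin n) ⟨k + 1, by omega⟩ ∈ transPerms n hn
  | 0, _ => by
    rw [mem_transPerms, ← step_one]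
    exact letter_mem n hn 1
  | k + 1, hk => by
    have ha : ∀ j (hj : j + 2 < n),
        Fin.cycleRange (penult n hn) ⟨j, by omega⟩ = ⟨j + 1, by omega⟩ :=
      fun j hj => Fin.ext (Fin.coe_cycleRange_of_lt (by simp [penult, Fin.lt_def]; omega))
    have hconj := swap_apply_apply (Fin.cycleRange (penult n hn)) ⟨k, by omega⟩ ⟨k + 1, by omega⟩
    rw [ha k (by omega), ha (k + 1) hk] at hconj
    rw [hconj]
    have hcyc := cycleRange_mem n hn
    exact mul_mem (mul_mem hcyc (swap_succ_mem k (by omega)))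
      ((transPerms n hn).inv_mem_of_finite hcyc)

theorem swap_zero_mem : ∀ k (hk : k + 1 < n),
    swap (⟨0, by omega⟩ : Fin n) ⟨k, by omega⟩ ∈ transPerms n hn
  | 0, _ => by rw [swap_self]; exact one_mem _
  | k + 1, hk => swap_mem_trans _ (swap_zero_mem k (by omega)) (swap_succ_mem n hn k hk)

theorem swap_mem {x y : Fin n} (hx : x ≠ sink n hn) (hy : y ≠ sink n hn) :
    swap x y ∈ transPerms n hn := by
  have hlt : ∀ z : Fin n, z ≠ sink n hn → z.val + 1 < n := fun z hz => by
    have := Fin.val_ne_of_ne hz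
    simp only [sink] at this
    omega
  have hx0 := swap_zero_mem n hn x (hlt x hx)
  rw [swap_comm] at hx0
  exact swap_mem_trans _ hx0 (swap_zero_mem n hn y (hlt y hy))

theorem transSemigroup_eq : ((witnessDFA n hn).transSemigroup : Set (Function.End (Fin n))) =
    {f | f (sink n hn) = sink n hn} := by
  ext f
  refine ⟨?_, fun hf => ?_⟩
  · rintro ⟨w, rfl⟩
    exact DFA.evalFrom_mem_accept (step_mem_accept n hn) rfl w.1
  have hperm : ∀ σ : Perm (Fin n), σ (sink n hn) = sink n hn → ⇑σ ∈ transMonoid n hn :=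
    mem_of_forall_swap_mem (transPerms n hn) (sink n hn) fun x y hx hy => swap_mem n hn hx hy
  have hupd := update_id_mem (transMonoid n hn) hperm
    (by simp [penult, Fin.ext_iff]; omega) (by simp [penult, sink, Fin.ext_iff]; omega)
    (by simp [sink, Fin.ext_iff]; omega)
    (step_two n hn ▸ letter_mem n hn 2) (step_three n hn ▸ letter_mem n hn 3)
  exact mem_of_apply_eq_self (transMonoid n hn) hperm hupd f hf

theorem exists_word_evalFrom_eq {f : Function.End (Fin n)} (hf : f (sink n hn) = sink n hn) :
    ∃ w : List (Fin 4), ∀ q, (witnessDFA n hn).evalFrom q w = f q := by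
  have : f ∈ (witnessDFA n hn).transSemigroup := by
    rw [← SetLike.mem_coe, transSemigroup_eq]
    exact hf
  obtain ⟨w, rfl⟩ := this
  exact ⟨w.1, fun q => rfl⟩

theorem eval_surjective : Surjective (witnessDFA n hn).eval := fun q => by
  have h0 : (⟨0, by omega⟩ : Fin n) ≠ sink n hn := by simp [sink, Fin.ext_iff]; omega
  obtain ⟨w, hw⟩ := exists_word_evalFrom_eq n hn (f := update id ⟨0, by omega⟩ q)
    (update_of_ne h0.symm ..)
  exact ⟨w, (hw _).trans (update_self ..)⟩

theorem eq_of_acceptsFrom_eq {p q : Fin n} (hp : p ≠ sink n hn)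
    (h : (witnessDFA n hn).acceptsFrom p = (witnessDFA n hn).acceptsFrom q) : p = q := by
  obtain ⟨w, hw⟩ := exists_word_evalFrom_eq n hn (f := update id p (sink n hn))
    (update_of_ne hp.symm ..)
  by_contra hpq
  have hq : w ∈ (witnessDFA n hn).acceptsFrom q := h ▸ (hw p).trans (update_self ..)
  rw [DFA.mem_acceptsFrom, hw, update_of_ne (Ne.symm hpq)] at hq
  exact hp (h ▸ hq : [] ∈ (witnessDFA n hn).acceptsFrom p)

theorem acceptsFrom_injective : Injective (witnessDFA n hn).acceptsFrom := by
  intro p q h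
  by_cases hp : p = sink n hn
  · by_cases hq : q = sink n hn
    · rw [hp, hq]
    · exact (eq_of_acceptsFrom_eq n hn hq h.symm).symm
  · exact eq_of_acceptsFrom_eq n hn hp h

end witnessDFA

end Automaton

/-- For `n ≥ 4`, the automaton `𝒜_n` with states `{0,…,n-1}`,
alphabet `{a,b,c,d}`, initial state `0`, final state `n-1` (transitions as in
`step9`) accepts a right ideal with quotient complexity `n` and syntactic
complexity exactly `n^{n-1}`. -/
theorem stmt_9 (n : ℕ) (hn : 4 ≤ n) :
    let M : DFA (Fin 4) (Fin n) :=
      { step := step9 n hn, start := ⟨0, by omega⟩, accept := {⟨n - 1, by omega⟩} }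
    IsRightIdeal (M.accepts : Set (List (Fin 4))) ∧
    quotCompl (M.accepts : Set (List (Fin 4))) = n ∧
    synCompl (M.accepts : Set (List (Fin 4))) = n ^ (n - 1) := by
  change IsRightIdeal ((witnessDFA n hn).accepts : Set (List (Fin 4))) ∧ _
  have hreach := witnessDFA.eval_surjective n hn
  have hdist := witnessDFA.acceptsFrom_injective n hn
  refine ⟨DFA.isRightIdeal_accepts ?_ (witnessDFA.step_mem_accept n hn), ?_, ?_⟩
  · obtain ⟨w, hw⟩ := hreach (witnessDFA.sink n hn)
    exact ⟨w, hw⟩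
  · exact (DFA.quotCompl_accepts hreach hdist).trans (Nat.card_fin n)
  · calc synCompl ((witnessDFA n hn).accepts : Set (List (Fin 4)))
        _ = Nat.card (witnessDFA n hn).transSemigroup := DFA.synCompl_accepts hreach hdist
        _ = Nat.card {f : Fin n → Fin n // f (witnessDFA.sink n hn) = witnessDFA.sink n hn} :=
          Nat.card_congr (Equiv.setCongr (witnessDFA.transSemigroup_eq n hn))
        _ = n ^ (n - 1) := by rw [card_fun_apply_eq_self, Nat.card_fin]
end

section
/- For every n ≥ 4 there exists a prefix-closed regular language L over a four-letter alphabet with quotient complexity κ(L) = n and syntactic complexity σ(L) = n^{n-1}; that is, the bound n^{n-1} is tight for prefix-closed languages. -/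
/-!
Take the DFA with states `Option (Fin (n - 1))`, where `none` is a rejecting sink, and letters
acting on `Fin (n - 1)` as the cycle `i ↦ i + 1`, the transposition `(0 1)`, the collapse `0 ↦ 1`
and the partial map sending `0` to the sink. Its language is prefix-closed because the sink is the
only rejecting state. The first two letters generate the symmetric group; conjugating the last two
by permutations gives every collapse `i ↦ j` and every kill `i ↦ none`, and these generate all
partial transformations of `Fin (n - 1)` (induction on the number of missed values). So each of
the `n ^ (n - 1)` transformations fixing the sink is induced by a word. In particular every state
is reachable and any two states are distinguishable, so the language has `n` quotients and its
syntactic semigroup is the transition semigroup of the DFA.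
-/

namespace DFA

variable {α σ : Type*} {M : DFA α σ} {L : Set (List α)}

def transitionSemigroup (M : DFA α σ) : Set (σ → σ) :=
  Set.range fun w : {w : List α // w ≠ []} => fun s => M.evalFrom s w

theorem step_mem_transitionSemigroup (a : α) : (M.step · a) ∈ M.transitionSemigroup :=
  ⟨⟨[a], List.cons_ne_nil a []⟩, rfl⟩

theorem comp_mem_transitionSemigroup {f g : σ → σ} (hf : f ∈ M.transitionSemigroup)
    (hg : g ∈ M.transitionSemigroup) : g ∘ f ∈ M.transitionSemigroup := by
  obtain ⟨⟨u, hu⟩, rfl⟩ := hf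
  obtain ⟨⟨v, _⟩, rfl⟩ := hg
  exact ⟨⟨u ++ v, by simp [hu]⟩, funext fun s => M.evalFrom_of_append s u v⟩

section Recognizes

variable (hL : ∀ w, w ∈ L ↔ M.eval w ∈ M.accept)
include hL

theorem mem_append_iff_mem_acceptsFrom (u v : List α) :
    u ++ v ∈ L ↔ v ∈ M.acceptsFrom (M.eval u) := by
  rw [hL, eval, evalFrom_of_append]
  rfl

theorem leftQ_eq_acceptsFrom_eval : leftQ L = M.acceptsFrom ∘ M.eval :=
  funext fun u => Set.ext fun v => mem_append_iff_mem_acceptsFrom hL u v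

variable (hreach : Function.Surjective M.eval)
include hreach

theorem range_leftQ_eq_range_acceptsFrom : Set.range (leftQ L) = Set.range M.acceptsFrom := by
  rw [leftQ_eq_acceptsFrom_eval hL]
  exact hreach.range_comp _

variable (hdist : Function.Injective M.acceptsFrom)
include hdist

theorem quotCompl_eq_card : quotCompl L = Nat.card σ := by
  rw [quotCompl, range_leftQ_eq_range_acceptsFrom hL hreach]
  exact Nat.card_range_of_injective hdist

theorem synRel_iff_evalFrom_eq {x y : List α} :
    synRel L x y ↔ (M.evalFrom · x) = (M.evalFrom · y) := by
  simp only [synRel, List.append_assoc, mem_append_iff_mem_acceptsFrom hL, mem_acceptsFrom, eval,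
    evalFrom_of_append]
  constructor
  · intro h
    funext s
    obtain ⟨u, rfl⟩ := hreach s
    exact hdist (Set.ext fun v => h u v)
  · intro h u v
    rw [congrFun h]

theorem synCompl_eq_card_transitionSemigroup :
    synCompl L = Nat.card M.transitionSemigroup := by
  have hker : synSetoid L =
      Setoid.ker fun w : {w : List α // w ≠ []} => fun s => M.evalFrom s w :=
    Setoid.ext fun _ _ => synRel_iff_evalFrom_eq hL hreach hdist
  rw [synCompl, hker]
  exact Nat.card_congr (Setoid.quotientKerEquivRange _)

end Recognizes

end DFA

theorem ncard_range_lt_ncard_range_update {ι β : Type*} [DecidableEq ι] [Finite ι] {g : ι → β}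
    {i j : ι} {c : β} (hij : i ≠ j) (hg : g i = g j) (hc : c ∉ Set.range g) :
    (Set.range g).ncard < (Set.range (Function.update g i c)).ncard := by
  refine Set.ncard_lt_ncard ⟨?_, fun h => hc (h ⟨i, Function.update_self i c g⟩)⟩
  rintro _ ⟨x, rfl⟩
  by_cases hx : x = i
  · subst hx
    exact ⟨j, by rw [Function.update_of_ne hij.symm, hg]⟩
  · exact ⟨x, Function.update_of_ne hx c g⟩

def ptLetter (m : ℕ) : Fin 4 → Fin (m + 2) → Option (Fin (m + 2))
  | 0 => some ∘ finRotate (m + 2)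
  | 1 => some ∘ Equiv.swap 0 1
  | 2 => some ∘ Function.update id 0 1
  | 3 => Function.update some 0 none

/-- A transformation of the states fixing the sink `none` is `(·.bind g)` for a partial
transformation `g` of `Fin (m + 2)`. -/
def ptDFA (m : ℕ) : DFA (Fin 4) (Option (Fin (m + 2))) where
  step s a := s.bind (ptLetter m a)
  start := some 0
  accept := {s | s.isSome}

namespace ptDFA

def Realizable (m : ℕ) (g : Fin (m + 2) → Option (Fin (m + 2))) : Prop :=
  (fun s => s.bind g) ∈ (ptDFA m).transitionSemigroup

variable {m : ℕ}

theorem realizable_letter (a : Fin 4) : Realizable m (ptLetter m a) :=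
  DFA.step_mem_transitionSemigroup a

theorem Realizable.bind {g h : Fin (m + 2) → Option (Fin (m + 2))} (hg : Realizable m g)
    (hh : Realizable m h) : Realizable m fun i => (g i).bind h := by
  simpa only [Realizable, Function.comp_def, Option.bind_assoc] using
    DFA.comp_mem_transitionSemigroup hg hh

theorem realizable_perm (τ : Equiv.Perm (Fin (m + 2))) : Realizable m (some ∘ τ) := by
  have hgen : τ ∈ Submonoid.closure {finRotate (m + 2), Equiv.swap 0 1} := by
    have htop := Equiv.Perm.closure_cycle_adjacent_swap (isCycle_finRotate (n := m))
      support_finRotate 0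
    rw [finRotate_apply, zero_add] at htop
    rw [← Subgroup.closure_toSubmonoid_of_finite, htop]
    trivial
  induction hgen using Submonoid.closure_induction with
  | mem τ hτ =>
    rcases hτ with rfl | rfl
    exacts [realizable_letter 0, realizable_letter 1]
  | one =>
    simpa [ptLetter, Function.comp_def] using (realizable_letter 1).bind (realizable_letter 1)
  | mul σ τ _ _ hσ hτ =>
    simpa [Function.comp_def] using hτ.bind hσ

theorem Realizable.conj {g : Fin (m + 2) → Option (Fin (m + 2))} (hg : Realizable m g)
    (τ : Equiv.Perm (Fin (m + 2))) : Realizable m (Option.map τ ∘ g ∘ τ.symm) := by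
  simpa [Function.comp_def, Option.map_eq_bind] using
    ((realizable_perm τ.symm).bind hg).bind (realizable_perm τ)

theorem realizable_collapse {i j : Fin (m + 2)} (hij : i ≠ j) :
    Realizable m (some ∘ Function.update id i j) := by
  obtain ⟨τ, hτi, hτj⟩ := MulAction.is_two_pretransitive_iff.mp
    (Equiv.Perm.isMultiplyPretransitive (Fin (m + 2)) 2) (zero_ne_one (α := Fin (m + 2))) hij
  convert (realizable_letter 2).conj τ using 1
  funext x
  simp only [Equiv.Perm.smul_def] at hτi hτj
  subst hτi hτj
  simp [ptLetter, Function.update_apply, Equiv.symm_apply_eq]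
  split_ifs <;> simp

theorem realizable_kill (i : Fin (m + 2)) : Realizable m (Function.update some i none) := by
  convert (realizable_letter 3).conj (Equiv.swap 0 i) using 1
  funext x
  simp [ptLetter, Function.update_apply, Equiv.swap_apply_eq_iff]
  split_ifs <;> simp

theorem realizable_some_comp (g : Fin (m + 2) → Fin (m + 2)) : Realizable m (some ∘ g) := by
  by_cases hinj : g.Injective
  · exact realizable_perm (Equiv.ofBijective g hinj.bijective_of_finite)
  obtain ⟨c, hc⟩ : ∃ c, c ∉ Set.range g := by
    simpa [Function.Surjective] using mt Finite.injective_iff_surjective.mpr hinj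
  obtain ⟨i, j, hg, hij⟩ : ∃ i j, g i = g j ∧ i ≠ j := by
    simpa [Function.Injective] using hinj
  -- `g` is `update g i c` followed by the collapse `c ↦ g i`, and `update g i c` has a larger range
  have hfactor : some ∘ g = fun x => (some (Function.update g i c x)).bind
      (some ∘ Function.update id c (g i)) := by
    funext x
    by_cases hx : x = i
    · simp [hx]
    · simp only [Function.comp_apply, Function.update_of_ne hx, Option.bind_some]
      rw [Function.update_of_ne fun h => hc ⟨x, h⟩, id]
  rw [hfactor]
  exact (realizable_some_comp (Function.update g i c)).bind
    (realizable_collapse fun h => hc ⟨i, h.symm⟩)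
termination_by Nat.card (Fin (m + 2)) - (Set.range g).ncard
decreasing_by
  have := ncard_range_lt_ncard_range_update hij hg hc
  have := Set.ncard_le_card (Set.range (Function.update g i c))
  omega

theorem realizable (g : Fin (m + 2) → Option (Fin (m + 2))) : Realizable m g := by
  by_cases htotal : ∀ i, (g i).isSome
  · convert realizable_some_comp fun i => (g i).get (htotal i)
    exact funext fun i => (Option.some_get _).symm
  obtain ⟨j, hj⟩ : ∃ j, some j ∉ Set.range g := by
    by_contra! hsome
    obtain ⟨i, hi⟩ : ∃ i, g i = none := by simpa using htotal
    have hsurj : Function.Surjective g := by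
      rintro (_ | j)
      exacts [⟨i, hi⟩, hsome j]
    simpa using Fintype.card_le_of_surjective g hsurj
  -- `g` is a total map with values in `Fin (m + 2) \ {j}` followed by the kill of `j`
  have hfactor : g = fun x => (some ((g x).getD j)).bind (Function.update some j none) := by
    funext x
    cases hx : g x with
    | none => simp
    | some y =>
      rw [Option.getD_some, Option.bind_some, Function.update_of_ne]
      rintro rfl
      exact hj ⟨x, hx⟩
  rw [hfactor]
  exact (realizable_some_comp fun x => (g x).getD j).bind (realizable_kill j)

theorem evalFrom_none (w : List (Fin 4)) : (ptDFA m).evalFrom none w = none := by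
  induction w with
  | nil => rfl
  | cons a w ih => exact ih

theorem exists_evalFrom_eq_bind (g : Fin (m + 2) → Option (Fin (m + 2))) :
    ∃ w : List (Fin 4), ∀ s, (ptDFA m).evalFrom s w = s.bind g := by
  obtain ⟨⟨w, _⟩, hw⟩ :
      (fun s : Option (Fin (m + 2)) => s.bind g) ∈ (ptDFA m).transitionSemigroup := realizable g
  exact ⟨w, congrFun hw⟩

theorem transitionSemigroup_eq :
    (ptDFA m).transitionSemigroup = Set.range fun g (s : Option (Fin (m + 2))) => s.bind g := by
  refine subset_antisymm ?_ fun _ ⟨g, hg⟩ => hg ▸ realizable g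
  rintro _ ⟨w, rfl⟩
  refine ⟨fun i => (ptDFA m).evalFrom (some i) w, funext fun s => ?_⟩
  cases s with
  | none => exact (evalFrom_none w).symm
  | some i => rfl

theorem eval_surjective : Function.Surjective (ptDFA m).eval := by
  intro s
  obtain ⟨w, hw⟩ := exists_evalFrom_eq_bind (m := m) fun _ => s
  exact ⟨w, hw (some 0)⟩

theorem acceptsFrom_injective : Function.Injective (ptDFA m).acceptsFrom := by
  intro s t hst
  by_contra hne
  obtain ⟨g, hg⟩ : ∃ g : Fin (m + 2) → Option (Fin (m + 2)),
      (s.bind g).isSome ≠ (t.bind g).isSome := by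
    cases s with
    | none =>
      cases t with
      | none => exact absurd rfl hne
      | some j => exact ⟨some, by simp⟩
    | some i =>
      cases t with
      | none => exact ⟨some, by simp⟩
      | some j =>
        have hji : j ≠ i := fun h => hne (h ▸ rfl)
        exact ⟨Function.update some i none, by simp [Function.update_of_ne hji]⟩
  obtain ⟨w, hw⟩ := exists_evalFrom_eq_bind g
  have hacc : w ∈ (ptDFA m).acceptsFrom s ↔ w ∈ (ptDFA m).acceptsFrom t := by rw [hst]
  simp only [DFA.mem_acceptsFrom, hw] at hacc
  exact hg (by simpa [ptDFA] using hacc)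

theorem card_transitionSemigroup :
    Nat.card (ptDFA m).transitionSemigroup = (m + 3) ^ (m + 2) := by
  have hinj : Function.Injective
      fun (g : Fin (m + 2) → Option (Fin (m + 2))) (s : Option (Fin (m + 2))) => s.bind g :=
    fun g h hgh => funext fun i => congrFun hgh (some i)
  rw [transitionSemigroup_eq, Nat.card_range_of_injective hinj]
  simp

theorem eval_mem_accept_of_prefix {u w : List (Fin 4)} (huw : u <+: w)
    (hw : (ptDFA m).eval w ∈ (ptDFA m).accept) : (ptDFA m).eval u ∈ (ptDFA m).accept := by
  obtain ⟨v, rfl⟩ := huw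
  by_contra hu
  have hnone : (ptDFA m).eval u = none := Option.not_isSome_iff_eq_none.mp hu
  rw [DFA.eval, DFA.evalFrom_of_append, ← DFA.eval, hnone, evalFrom_none] at hw
  exact Bool.false_ne_true hw

end ptDFA

/-- For every `n ≥ 4` there exists a prefix-closed regular
language over a four-letter alphabet with quotient complexity `n` and syntactic
complexity `n^{n-1}`. -/
theorem stmt_10 (n : ℕ) (hn : 4 ≤ n) :
    ∃ L : Set (List (Fin 4)),
      (∀ w ∈ L, ∀ u : List (Fin 4), u <+: w → u ∈ L) ∧
      (Set.range (leftQ L)).Finite ∧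
      quotCompl L = n ∧ synCompl L = n ^ (n - 1) := by
  obtain ⟨m, rfl⟩ : ∃ m, n = m + 3 := ⟨n - 3, by omega⟩
  set M := ptDFA m
  have hL : ∀ w, w ∈ {w | M.eval w ∈ M.accept} ↔ M.eval w ∈ M.accept := fun _ => Iff.rfl
  have hreach : Function.Surjective M.eval := ptDFA.eval_surjective
  have hdist : Function.Injective M.acceptsFrom := ptDFA.acceptsFrom_injective
  refine ⟨{w | M.eval w ∈ M.accept}, fun w hw u hu => ptDFA.eval_mem_accept_of_prefix hu hw,
    ?_, ?_, ?_⟩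
  · rw [DFA.range_leftQ_eq_range_acceptsFrom hL hreach]
    exact Set.finite_range _
  · rw [DFA.quotCompl_eq_card hL hreach hdist]
    simp
  · rw [DFA.synCompl_eq_card_transitionSemigroup hL hreach hdist, ptDFA.card_transitionSemigroup]
    rfl
end

section
/- If L is a left ideal over a finite alphabet Σ, then for every word w ∈ Σ* the sequence of left quotients L, L_w, L_{w²}, L_{w³}, … is eventually constant; that is, there exists i ≥ 0 such that L_{w^i} = L_{w^{i+1}} (the behavior of every word on the quotient automaton of L is aperiodic). -/
/-- The `i`-th power `w^i` of a word `w` (concatenation of `i` copies). -/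
def wordPow {α : Type*} (w : List α) : ℕ → List α
  | 0 => []
  | i + 1 => w ++ wordPow w i

/-- If `L` is a regular left ideal, then for every word `w`
the sequence of quotients `L, L_w, L_{w²}, …` is eventually constant: there is
`i ≥ 0` with `L_{w^i} = L_{w^{i+1}}` (the behavior of every word is aperiodic). -/
theorem stmt_12 {α : Type*} [Fintype α] (L : Set (List α))
    (hreg : (Set.range (leftQ L)).Finite) (hL : IsLeftIdeal L) :
    ∀ w : List α, ∃ i : ℕ, leftQ L (wordPow w i) = leftQ L (wordPow w (i + 1)) := by
  intro w
  -- the sequence of quotients is ⊆-increasing, since L is a left ideal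
  set f : ℕ → Set (List α) := fun i => leftQ L (wordPow w i) with hf
  have hmono : ∀ i, f i ⊆ f (i + 1) := by
    intro i x hx
    have hx' : wordPow w i ++ x ∈ L := hx
    show w ++ wordPow w i ++ x ∈ L
    rw [hL.2]
    exact ⟨w, wordPow w i ++ x, hx', by simp⟩
  by_contra hcon
  push_neg at hcon
  have hstrict : StrictMono f := strictMono_nat_of_lt_succ fun i =>
    lt_of_le_of_ne (hmono i) (hcon i)
  have hinj : Function.Injective f := hstrict.injective
  have hfin : (Set.range f).Finite :=
    hreg.subset (by rintro _ ⟨i, rfl⟩; exact ⟨wordPow w i, rfl⟩)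
  exact (Set.infinite_range_of_injective hinj) hfin
end

section
/- For n ≥ 1, the number of functions t : {0,1,…,n-1} → {0,1,…,n-1} for which there is no index i ≥ 0 with t^{i+1}(0) = t^{i}(0) (equivalently, the eventually periodic orbit of 0 under iteration of t has period at least 2) equals ∑_{j=2}^{n} ((n-1)!/(n-j)!) · (j-1) · n^{n-j}. -/
/-!
The orbit of `x` under `f` visits `J` distinct points `x = a₀, a₁, …, a_{J-1}` and then
returns to `a_r` for a unique `r < J`; its period is `J - r`, so the behaviour is aperiodic
exactly when `r = J - 1`. Conversely, for given `J`, `r` and distinct `a₁, …, a_{J-1} ≠ x`, the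
maps with this ρ-shaped orbit are those with `f aᵢ = aᵢ₊₁` and `f a_{J-1} = a_r`, arbitrary on
the other `n - J` points. Counting `(n-1)!/(n-J)!` choices of the `aᵢ`, `J - 1` choices of
`r < J - 1` and `n^{n-J}` maps for each gives the formula.
-/

namespace Function

variable {α : Type*}

theorem card_comp_eq_of_injective {β ι : Type*} [Fintype α] [DecidableEq α] [Fintype β]
    [DecidableEq β] [Fintype ι] {a : ι → α} (ha : Injective a) (w : ι → β) :
    Fintype.card {g : α → β // g ∘ a = w} =
      Fintype.card β ^ (Fintype.card α - Fintype.card ι) := by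
  classical
  let e := Equiv.ofInjective a ha
  have hcomp : ∀ g : α → β, g ∘ a = w ↔ g ∘ Subtype.val = w ∘ e.symm := fun g => by
    rw [Equiv.eq_comp_symm]; rfl
  rw [Fintype.card_congr ((Equiv.subtypeEquivRight hcomp).trans (Equiv.subtypePreimage _ _)),
    Fintype.card_fun, Fintype.card_subtype_compl, Set.card_range_of_injective ha]

section Dynamics

variable [Finite α] (f : α → α) (x : α)

theorem exists_iterate_eq_of_lt : ∃ j, ∃ i < j, f^[i] x = f^[j] x := by
  obtain ⟨i, j, hij, h⟩ := Finite.exists_ne_map_eq_of_infinite fun k => f^[k] x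
  rcases hij.lt_or_gt with hij | hij
  · exact ⟨j, i, hij, h⟩
  · exact ⟨i, j, hij, h.symm⟩

open scoped Classical in
/-- The number of distinct points `x, f x, f (f x), …` of the orbit of `x`. -/
noncomputable def orbitLength : ℕ := Nat.find (exists_iterate_eq_of_lt f x)

theorem orbitLength_le {i j : ℕ} (hij : i < j) (h : f^[i] x = f^[j] x) :
    orbitLength f x ≤ j := by
  classical exact Nat.find_le ⟨i, hij, h⟩

theorem exists_iterate_eq_iterate_orbitLength :
    ∃ i < orbitLength f x, f^[i] x = f^[orbitLength f x] x := by
  classical exact Nat.find_spec (exists_iterate_eq_of_lt f x)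

open scoped Classical in
/-- The index at which the orbit of `x` enters its cycle. -/
noncomputable def preperiod : ℕ := Nat.find (exists_iterate_eq_iterate_orbitLength f x)

theorem preperiod_lt_orbitLength : preperiod f x < orbitLength f x := by
  classical exact (Nat.find_spec (exists_iterate_eq_iterate_orbitLength f x)).1

theorem iterate_orbitLength : f^[orbitLength f x] x = f^[preperiod f x] x := by
  classical exact (Nat.find_spec (exists_iterate_eq_iterate_orbitLength f x)).2.symm

theorem injOn_iterate_orbitLength :
    Set.InjOn (fun i => f^[i] x) (Set.Iio (orbitLength f x)) := by
  classical
  have key : ∀ {i j}, i < j → j < orbitLength f x → f^[i] x ≠ f^[j] x :=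
    fun hij hj h => Nat.find_min (exists_iterate_eq_of_lt f x) hj ⟨_, hij, h⟩
  intro i hi j hj h
  by_contra hne
  rcases Ne.lt_or_gt hne with hij | hij
  · exact key hij hj h
  · exact key hij hi h.symm

theorem orbitLength_le_card : orbitLength f x ≤ Nat.card α := by
  have hinj : Injective fun i : Fin (orbitLength f x) => f^[i] x :=
    fun i j h => Fin.ext (injOn_iterate_orbitLength f x i.2 j.2 h)
  simpa using Nat.card_le_card_of_injective _ hinj

variable {f x} in
/-- A fixed point on the orbit of `x` lies on its cycle, and a cycle through a fixed point
has length one. -/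
theorem isFixedPt_iterate_preperiod {i : ℕ} (hi : IsFixedPt f (f^[i] x)) :
    IsFixedPt f (f^[preperiod f x] x) := by
  set p := preperiod f x
  have hper : IsPeriodicPt f (orbitLength f x - p) (f^[p] x) := by
    rw [IsPeriodicPt, IsFixedPt, ← iterate_add_apply,
      Nat.sub_add_cancel (preperiod_lt_orbitLength f x).le, iterate_orbitLength]
  have hfar : f^[(orbitLength f x - p) * i] (f^[p] x) = f^[i] x := by
    have hle : i ≤ (orbitLength f x - p) * i + p :=
      le_add_right (Nat.le_mul_of_pos_left i (by have := preperiod_lt_orbitLength f x; omega))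
    rw [← iterate_add_apply, ← Nat.sub_add_cancel hle, iterate_add_apply, iterate_fixed hi]
  rw [← (hper.mul_const i).eq, hfar]
  exact hi

theorem not_exists_iterate_succ_eq_iff :
    (¬∃ i, f^[i + 1] x = f^[i] x) ↔ preperiod f x + 1 < orbitLength f x := by
  have hlt := preperiod_lt_orbitLength f x
  constructor
  · intro h
    by_contra hle
    refine h ⟨preperiod f x, ?_⟩
    rw [show preperiod f x + 1 = orbitLength f x by omega, iterate_orbitLength]
  · rintro hlt' ⟨i, hi⟩
    have hfix : IsFixedPt f (f^[preperiod f x] x) :=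
      isFixedPt_iterate_preperiod (by rwa [IsFixedPt, ← iterate_succ_apply' f i x])
    have := injOn_iterate_orbitLength f x (show preperiod f x + 1 ∈ Set.Iio _ from hlt') hlt
      (by simp only [iterate_succ_apply']; exact hfix)
    omega

end Dynamics

section Rho

variable {k : ℕ}

/-- The successor map of the ρ-shaped graph `0 → 1 → ⋯ → k → r` on `Fin (k + 1)`. -/
def rhoSucc (r : Fin (k + 1)) : Fin (k + 1) → Fin (k + 1) := Fin.lastCases r Fin.succ

theorem iterate_eq_of_comp_eq_comp_rhoSucc {f : α → α} {a : Fin (k + 1) → α} {r : Fin (k + 1)}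
    (h : f ∘ a = a ∘ rhoSucc r) (i : Fin (k + 1)) : f^[i] (a 0) = a i := by
  induction i using Fin.induction with
  | zero => rfl
  | succ i ih =>
    rw [Fin.val_succ, iterate_succ_apply', ← Fin.val_castSucc, ih, ← comp_apply (f := f), h,
      comp_apply, rhoSucc, Fin.lastCases_castSucc]

theorem orbitLength_eq_of_comp_eq_comp_rhoSucc [Finite α] {f : α → α} {a : Fin (k + 1) → α}
    {r : Fin (k + 1)} (ha : Injective a) (h : f ∘ a = a ∘ rhoSucc r) :
    orbitLength f (a 0) = k + 1 ∧ preperiod f (a 0) = r := by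
  have horbit := iterate_eq_of_comp_eq_comp_rhoSucc h
  have hlast : f^[k + 1] (a 0) = f^[r] (a 0) := by
    have hk := horbit (Fin.last k)
    rw [Fin.val_last] at hk
    rw [iterate_succ_apply', hk, ← comp_apply (f := f), h, comp_apply, rhoSucc,
      Fin.lastCases_last, horbit]
  have hlen : orbitLength f (a 0) = k + 1 := by
    refine le_antisymm (orbitLength_le f (a 0) r.2 hlast.symm) (not_lt.1 fun hlt => ?_)
    obtain ⟨i, hi, heq⟩ := exists_iterate_eq_iterate_orbitLength f (a 0)
    have := ha ((horbit ⟨i, by omega⟩).symm.trans (heq.trans (horbit ⟨_, hlt⟩)))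
    simp only [Fin.mk.injEq] at this
    omega
  refine ⟨hlen, ?_⟩
  have hr : r.val ∈ Set.Iio (orbitLength f (a 0)) := by
    simpa only [Set.mem_Iio, hlen] using r.2
  exact injOn_iterate_orbitLength f (a 0) (preperiod_lt_orbitLength f (a 0)) hr
    (by simp only [← iterate_orbitLength, hlen, hlast])

def consNe (x : α) (b : Fin k ↪ {y // y ≠ x}) : Fin (k + 1) → α := Fin.cons x (Subtype.val ∘ b)

theorem consNe_injective (x : α) (b : Fin k ↪ {y // y ≠ x}) : Injective (consNe x b) :=
  Fin.cons_injective_iff.2 ⟨fun ⟨i, hi⟩ => (b i).2 hi, Subtype.val_injective.comp b.injective⟩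

theorem consNe_left_injective (x : α) : Injective (consNe (k := k) x) := fun _ _ h =>
  DFunLike.ext _ _ fun i => Subtype.ext (congrFun h i.succ)

theorem orbitLength_eq_and_preperiod_eq_iff [Finite α] (f : α → α) (x : α) (r : Fin (k + 1)) :
    orbitLength f x = k + 1 ∧ preperiod f x = r ↔
      ∃ b : Fin k ↪ {y // y ≠ x}, f ∘ consNe x b = consNe x b ∘ rhoSucc r := by
  constructor
  · rintro ⟨hlen, hpre⟩
    have hinj : Set.InjOn (fun i => f^[i] x) (Set.Iio (k + 1)) :=
      hlen ▸ injOn_iterate_orbitLength f x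
    let b : Fin k ↪ {y // y ≠ x} :=
      ⟨fun i => ⟨f^[i + 1] x, fun h => i.val.succ_ne_zero (hinj (by simp) (by simp) h)⟩,
        fun _ _ h => Fin.ext <| Nat.succ_injective <|
          hinj (by simp) (by simp) (congrArg Subtype.val h)⟩
    have hpath : consNe x b = fun i : Fin (k + 1) => f^[i] x := funext fun i => by
      cases i using Fin.cases <;> rfl
    refine ⟨b, ?_⟩
    rw [hpath]
    funext i
    cases i using Fin.lastCases with
    | last =>
      simp only [comp_apply, rhoSucc, Fin.lastCases_last, Fin.val_last, ← iterate_succ_apply' f]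
      rw [← hpre, ← iterate_orbitLength, hlen]
    | cast i =>
      simp only [comp_apply, rhoSucc, Fin.lastCases_castSucc, Fin.val_castSucc, Fin.val_succ,
        iterate_succ_apply']
  · rintro ⟨b, h⟩
    exact orbitLength_eq_of_comp_eq_comp_rhoSucc (consNe_injective x b) h

end Rho

section Counting

open Finset

variable [Fintype α]

theorem card_orbitLength_eq_preperiod_eq [DecidableEq α] (x : α) {k : ℕ} (r : Fin (k + 1)) :
    #{f : α → α | orbitLength f x = k + 1 ∧ preperiod f x = r} =
      (Fintype.card α - 1).descFactorial k * Fintype.card α ^ (Fintype.card α - (k + 1)) := by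
  have hunion : ({f : α → α | orbitLength f x = k + 1 ∧ preperiod f x = r} : Finset _) =
      univ.biUnion fun b => {f | f ∘ consNe x b = consNe x b ∘ rhoSucc r} := by
    ext f
    simp [orbitLength_eq_and_preperiod_eq_iff]
  have hdisj : ((univ : Finset (Fin k ↪ {y // y ≠ x})) : Set _).PairwiseDisjoint
      fun b => ({f | f ∘ consNe x b = consNe x b ∘ rhoSucc r} : Finset (α → α)) := by
    intro b _ b' _ hne
    refine disjoint_filter.2 fun f _ h h' => hne (consNe_left_injective x (funext fun i => ?_))
    rw [← iterate_eq_of_comp_eq_comp_rhoSucc h, ← iterate_eq_of_comp_eq_comp_rhoSucc h']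
    rfl
  have hcard : Fintype.card {y // y ≠ x} = Fintype.card α - 1 := by
    simp only [ne_eq, Fintype.card_subtype_compl, Fintype.card_unique]
  rw [hunion, card_biUnion hdisj, sum_const_nat fun b _ => ?_, card_univ,
    Fintype.card_embedding_eq, Fintype.card_fin, hcard]
  rw [← Fintype.card_subtype, card_comp_eq_of_injective (consNe_injective x b), Fintype.card_fin]

theorem card_not_exists_iterate_succ_eq (x : α) :
    Nat.card {f : α → α // ¬∃ i, f^[i + 1] x = f^[i] x} =
      ∑ j ∈ Icc 2 (Fintype.card α), (Fintype.card α - 1).descFactorial (j - 1) * (j - 1) *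
        Fintype.card α ^ (Fintype.card α - j) := by
  classical
  set N := Fintype.card α
  simp only [not_exists_iterate_succ_eq_iff, Nat.card_eq_fintype_card, Fintype.card_subtype]
  set S : Finset (α → α) := {f | preperiod f x + 1 < orbitLength f x}
  have hmaps : ∀ f ∈ S,
      (⟨orbitLength f x, preperiod f x⟩ : Σ _ : ℕ, ℕ) ∈ (Icc 2 N).sigma fun j => range (j - 1) := by
    intro f hf
    have := Nat.card_eq_fintype_card (α := α) ▸ orbitLength_le_card f x
    simp only [S, mem_filter, mem_univ, true_and] at hf
    simp only [mem_sigma, mem_Icc, mem_range]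
    omega
  rw [card_eq_sum_card_fiberwise hmaps, sum_sigma]
  refine sum_congr rfl fun j hj => ?_
  obtain ⟨k, rfl⟩ : ∃ k, j = k + 1 := ⟨j - 1, by simp only [mem_Icc] at hj; omega⟩
  have hfiber : ∀ r ∈ range k,
      #{f ∈ S | (⟨orbitLength f x, preperiod f x⟩ : Σ _ : ℕ, ℕ) = ⟨k + 1, r⟩} =
        (N - 1).descFactorial k * N ^ (N - (k + 1)) := by
    intro r hr
    rw [mem_range] at hr
    rw [← card_orbitLength_eq_preperiod_eq x (⟨r, by omega⟩ : Fin (k + 1)), filter_filter]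
    congr 1
    refine filter_congr fun f _ => ?_
    simp only [Sigma.mk.injEq, heq_eq_eq]
    omega
  rw [Nat.add_sub_cancel, sum_congr rfl hfiber, sum_const, card_range, smul_eq_mul]
  ring

end Counting

end Function

/-- For `n ≥ 1`, the number of transformations
`t : {0,…,n-1} → {0,…,n-1}` whose behavior on `0` is *not* aperiodic (there is
no `i` with `t^{i+1}(0) = t^i(0)`) equals
`∑_{j=2}^n (n-1)!/(n-j)! ⬝ (j-1) ⬝ n^{n-j}`. -/
theorem stmt_14 (n : ℕ) (hn : 1 ≤ n) :
    Nat.card {t : Fin n → Fin n //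
        ¬ ∃ i : ℕ, t^[i + 1] ⟨0, hn⟩ = t^[i] ⟨0, hn⟩} =
      ∑ j ∈ Finset.Icc 2 n,
        (Nat.factorial (n - 1) / Nat.factorial (n - j)) * (j - 1) * n ^ (n - j) := by
  rw [Function.card_not_exists_iterate_succ_eq, Fintype.card_fin]
  refine Finset.sum_congr rfl fun j hj => ?_
  rw [Finset.mem_Icc] at hj
  rw [Nat.descFactorial_eq_div (by omega), show n - 1 - (j - 1) = n - j by omega]
end
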